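/- Let 0 → A → E → G → 1 be a Γ-equivariant central extension of groups. Then the sequence of pointed sets 0 → A^Γ → E^Γ → G^Γ → H^1(Γ,A) → H^1(Γ,E) → H^1(Γ,G) → H^2(Γ,A) is exact, where the last map is the connecting map defined via lifting cocycles. -/
import Mathlib


/-- 1-cocycle condition for a group `Γ` acting on a group `E` via `φ`:
`s (γμ) = s γ · γ(s μ)`. -/
def IsCocycle1 {Γ E : Type*} [Group Γ] [Group E] (φ : Γ →* MulAut E) (s : Γ → E) : Prop :=
  ∀ γ μ, s (γ * μ) = s γ * φ γ (s μ)

/-- The failure `δℓ` of a set-theoretic lift `ℓ` to be a cocycle. -/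
def dlift {Γ E : Type*} [Group Γ] [Group E] (φ : Γ →* MulAut E) (ℓ : Γ → E)
    (γ μ : Γ) : E :=
  ℓ γ * φ γ (ℓ μ) * (ℓ (γ * μ))⁻¹

/-- The 2-coboundary of a 1-cochain `b`. -/
def cobound2 {Γ E : Type*} [Group Γ] [Group E] (φ : Γ →* MulAut E) (b : Γ → E)
    (γ μ : Γ) : E :=
  φ γ (b μ) * (b (γ * μ))⁻¹ * b γ

private lemma central_inv_swap {E : Type*} [Group E] {z : E}
    (h : ∀ g, g * z = z * g) : ∀ g : E, g * z⁻¹ = z⁻¹ * g := fun g => by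
  calc g * z⁻¹ = z⁻¹ * (z * g) * z⁻¹ := by group
  _ = z⁻¹ * (g * z) * z⁻¹ := by rw [h g]
  _ = z⁻¹ * g := by group

private lemma helper1 {E : Type*} [Group E] (z1 z2 z3 P1 P2 : E)
    (h2 : ∀ g, g * z2 = z2 * g) (h3 : ∀ g, g * z3 = z3 * g) :
    (z1 * P1) * (z2 * P2) * (z3 * (P1 * P2))⁻¹ = z2 * z3⁻¹ * z1 := by
  have h3' := central_inv_swap h3
  calc (z1 * P1) * (z2 * P2) * (z3 * (P1 * P2))⁻¹
      = z1 * (P1 * z2) * (P2 * (P1 * P2)⁻¹ * z3⁻¹) := by group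
    _ = z1 * (z2 * P1) * (P2 * (P1 * P2)⁻¹ * z3⁻¹) := by rw [h2 P1]
    _ = (z1 * z2) * z3⁻¹ := by group
    _ = (z2 * z1) * z3⁻¹ := by rw [h2 z1]
    _ = z2 * (z1 * z3⁻¹) := by group
    _ = z2 * (z3⁻¹ * z1) := by rw [h3' z1]
    _ = z2 * z3⁻¹ * z1 := by group

private lemma helper2 {E : Type*} [Group E] (z1 z2 z3 A1 A2 A3 : E)
    (h2 : ∀ g, g * z2 = z2 * g) (h3 : ∀ g, g * z3 = z3 * g)
    (hrel : A1 * A2 * A3⁻¹ = z2 * z3⁻¹ * z1) :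
    z3⁻¹ * A3 = z1⁻¹ * A1 * (z2⁻¹ * A2) := by
  have h2' := central_inv_swap h2
  have h3' := central_inv_swap h3
  have hA : A1 * A2 = z2 * z3⁻¹ * z1 * A3 := by rw [← hrel]; group
  symm
  calc z1⁻¹ * A1 * (z2⁻¹ * A2)
      = z1⁻¹ * ((A1 * z2⁻¹) * A2) := by group
    _ = z1⁻¹ * ((z2⁻¹ * A1) * A2) := by rw [h2' A1]
    _ = z1⁻¹ * z2⁻¹ * (A1 * A2) := by group
    _ = z1⁻¹ * z2⁻¹ * (z2 * z3⁻¹ * z1 * A3) := by rw [hA]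
    _ = (z1⁻¹ * z3⁻¹) * (z1 * A3) := by group
    _ = (z3⁻¹ * z1⁻¹) * (z1 * A3) := by rw [h3' z1⁻¹]
    _ = z3⁻¹ * A3 := by group

/-- Seven-term exact sequence
`0 → A^Γ → E^Γ → G^Γ → H¹(Γ,A) → H¹(Γ,E) → H¹(Γ,G) → H²(Γ,A)` for a `Γ`-equivariant
central extension `0 → A → E → G → 1` (`A = ker π` central in `E`), stated as exactness
at `E^Γ`, at `G^Γ`, at `H¹(Γ,A)`, at `H¹(Γ,E)` and at `H¹(Γ,G)` (the last one via the
connecting map defined by lifting cocycles). -/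
theorem seven_term_exact_sequence
    {Γ E G : Type*} [Group Γ] [Group E] [Group G]
    (π : E →* G) (hsurj : Function.Surjective π)
    (hcent : π.ker ≤ Subgroup.center E)
    (φ : Γ →* MulAut E) (ψ : Γ →* MulAut G)
    (hequiv : ∀ γ x, π (φ γ x) = ψ γ (π x)) :
    -- exactness at `E^Γ`
    (∀ x : E, (∀ γ, φ γ x = x) →
      (π x = 1 ↔ ∃ a ∈ π.ker, (∀ γ, φ γ a = a) ∧ a = x)) ∧
    -- exactness at `G^Γ`
    (∀ g : G, (∀ γ, ψ γ g = g) → ∀ e : E, π e = g →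
      ((∃ a ∈ π.ker, ∀ γ, e⁻¹ * φ γ e = a⁻¹ * φ γ a) ↔
        ∃ x : E, (∀ γ, φ γ x = x) ∧ π x = g)) ∧
    -- exactness at `H¹(Γ,A)`
    (∀ c : Γ → E, (∀ γ, c γ ∈ π.ker) → IsCocycle1 φ c →
      ((∃ x : E, ∀ γ, c γ = x⁻¹ * φ γ x) ↔
        ∃ (g : G) (e : E) (a : E), (∀ γ, ψ γ g = g) ∧ π e = g ∧ a ∈ π.ker ∧
          ∀ γ, c γ = (a⁻¹ * φ γ a) * (e⁻¹ * φ γ e))) ∧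
    -- exactness at `H¹(Γ,E)`
    (∀ s : Γ → E, IsCocycle1 φ s →
      ((∃ x : G, ∀ γ, π (s γ) = x⁻¹ * ψ γ x) ↔
        ∃ (c : Γ → E) (x : E), (∀ γ, c γ ∈ π.ker) ∧ IsCocycle1 φ c ∧
          ∀ γ, s γ = x⁻¹ * c γ * φ γ x)) ∧
    -- exactness at `H¹(Γ,G)`
    (∀ η : Γ → G, IsCocycle1 ψ η → ∀ ℓ : Γ → E, (∀ γ, π (ℓ γ) = η γ) →
      ((∃ b : Γ → E, (∀ γ, b γ ∈ π.ker) ∧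
          ∀ γ μ, dlift φ ℓ γ μ = cobound2 φ b γ μ) ↔
        ∃ (s : Γ → E) (x : G), IsCocycle1 φ s ∧
          ∀ γ, π (s γ) = x⁻¹ * η γ * ψ γ x)) := by
  have hker : ∀ a ∈ π.ker, ∀ g : E, g * a = a * g := fun a ha g =>
    (Subgroup.mem_center_iff.mp (hcent ha)) g
  have hkerφ : ∀ (γ : Γ), ∀ a ∈ π.ker, φ γ a ∈ π.ker := by
    intro γ a ha
    rw [MonoidHom.mem_ker] at ha ⊢
    rw [hequiv, ha, map_one]
  refine ⟨?_, ?_, ?_, ?_, ?_⟩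
  · -- exactness at E^Γ
    intro x hx
    constructor
    · intro hπ
      exact ⟨x, MonoidHom.mem_ker.mpr hπ, hx, rfl⟩
    · rintro ⟨a, ha, -, rfl⟩
      exact MonoidHom.mem_ker.mp ha
  · -- exactness at G^Γ
    intro g hg e he
    constructor
    · rintro ⟨a, ha, hae⟩
      refine ⟨e * a⁻¹, fun γ => ?_, ?_⟩
      · have h1 : φ γ e = e * (a⁻¹ * φ γ a) := by rw [← hae γ]; group
        rw [map_mul, map_inv, h1]
        group
      · rw [map_mul, map_inv, MonoidHom.mem_ker.mp ha, he, inv_one, mul_one]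
    · rintro ⟨x, hx, hπx⟩
      refine ⟨x⁻¹ * e, ?_, fun γ => ?_⟩
      · rw [MonoidHom.mem_ker, map_mul, map_inv, hπx, he, inv_mul_cancel]
      · rw [map_mul, map_inv, hx]
        group
  · -- exactness at H¹(Γ,A)
    intro c hc hcoc
    constructor
    · rintro ⟨x, hx⟩
      refine ⟨π x, x, 1, fun γ => ?_, rfl, one_mem _, fun γ => ?_⟩
      · rw [← hequiv]
        have h1 : φ γ x = x * c γ := by rw [hx γ]; group
        rw [h1, map_mul, MonoidHom.mem_ker.mp (hc γ), mul_one]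
      · simpa using hx γ
    · rintro ⟨g, e, a, hg, he, ha, hca⟩
      refine ⟨a * e, fun γ => ?_⟩
      have hφa := hkerφ γ a ha
      rw [hca γ, map_mul, mul_inv_rev]
      calc a⁻¹ * φ γ a * (e⁻¹ * φ γ e)
          = a⁻¹ * (φ γ a * e⁻¹) * φ γ e := by group
        _ = a⁻¹ * (e⁻¹ * φ γ a) * φ γ e := by rw [← hker _ hφa e⁻¹]
        _ = (a⁻¹ * e⁻¹) * (φ γ a * φ γ e) := by group
        _ = (e⁻¹ * a⁻¹) * (φ γ a * φ γ e) := by rw [← hker _ (inv_mem ha) e⁻¹]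
        _ = e⁻¹ * a⁻¹ * (φ γ a * φ γ e) := by group
  · -- exactness at H¹(Γ,E)
    intro s hs
    constructor
    · rintro ⟨x, hx⟩
      obtain ⟨y, hy⟩ := hsurj x
      refine ⟨fun γ => y * s γ * (φ γ y)⁻¹, y, fun γ => ?_, fun γ μ => ?_, fun γ => ?_⟩
      · rw [MonoidHom.mem_ker, map_mul, map_mul, map_inv, hequiv, hy, hx γ]
        group
      · have key : φ (γ * μ) y = φ γ (φ μ y) := by rw [map_mul]; rfl
        show y * s (γ * μ) * (φ (γ * μ) y)⁻¹ =
          (y * s γ * (φ γ y)⁻¹) * φ γ (y * s μ * (φ μ y)⁻¹)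
        rw [hs γ μ, key, map_mul, map_mul, map_inv]
        group
      · show s γ = y⁻¹ * (y * s γ * (φ γ y)⁻¹) * φ γ y
        group
    · rintro ⟨c, x, hcker, -, hsx⟩
      refine ⟨π x, fun γ => ?_⟩
      rw [hsx γ, map_mul, map_mul, map_inv, hequiv, MonoidHom.mem_ker.mp (hcker γ),
        mul_one]
  · -- exactness at H¹(Γ,G)
    intro η hη ℓ hℓ
    constructor
    · rintro ⟨b, hb, hdb⟩
      refine ⟨fun γ => (b γ)⁻¹ * ℓ γ, 1, fun γ μ => ?_, fun γ => ?_⟩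
      · show (b (γ * μ))⁻¹ * ℓ (γ * μ) =
          ((b γ)⁻¹ * ℓ γ) * φ γ ((b μ)⁻¹ * ℓ μ)
        rw [map_mul, map_inv]
        have hrel := hdb γ μ
        simp only [dlift, cobound2] at hrel
        exact helper2 (b γ) (φ γ (b μ)) (b (γ * μ)) (ℓ γ) (φ γ (ℓ μ)) (ℓ (γ * μ))
          (hker _ (hkerφ γ _ (hb μ))) (hker _ (hb (γ * μ))) hrel
      · show π ((b γ)⁻¹ * ℓ γ) = 1⁻¹ * η γ * ψ γ 1
        rw [map_mul, map_inv, MonoidHom.mem_ker.mp (hb γ), hℓ γ]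
        simp
    · rintro ⟨s, x, hscoc, hsx⟩
      obtain ⟨y, hy⟩ := hsurj x
      set ℓ' : Γ → E := fun γ => y * s γ * (φ γ y)⁻¹ with hℓ'def
      have hℓ'π : ∀ γ, π (ℓ' γ) = η γ := by
        intro γ
        show π (y * s γ * (φ γ y)⁻¹) = η γ
        rw [map_mul, map_mul, map_inv, hequiv, hy, hsx γ]
        group
      have hℓ'coc : ∀ γ μ, ℓ' γ * φ γ (ℓ' μ) = ℓ' (γ * μ) := by
        intro γ μ
        have key : φ (γ * μ) y = φ γ (φ μ y) := by rw [map_mul]; rfl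
        show (y * s γ * (φ γ y)⁻¹) * φ γ (y * s μ * (φ μ y)⁻¹) =
          y * s (γ * μ) * (φ (γ * μ) y)⁻¹
        rw [hscoc γ μ, key, map_mul, map_mul, map_inv]
        group
      refine ⟨fun γ => ℓ γ * (ℓ' γ)⁻¹, fun γ => ?_, fun γ μ => ?_⟩
      · rw [MonoidHom.mem_ker, map_mul, map_inv, hℓ'π γ, hℓ γ, mul_inv_cancel]
      · have hbker : ∀ ν, ℓ ν * (ℓ' ν)⁻¹ ∈ π.ker := fun ν => by
          rw [MonoidHom.mem_ker, map_mul, map_inv, hℓ'π ν, hℓ ν, mul_inv_cancel]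
        simp only [dlift, cobound2, map_mul, map_inv]
        calc ℓ γ * φ γ (ℓ μ) * (ℓ (γ * μ))⁻¹
            = ((ℓ γ * (ℓ' γ)⁻¹) * ℓ' γ) *
              ((φ γ (ℓ μ) * (φ γ (ℓ' μ))⁻¹) * φ γ (ℓ' μ)) *
              ((ℓ (γ * μ) * (ℓ' (γ * μ))⁻¹) * (ℓ' γ * φ γ (ℓ' μ)))⁻¹ := by
              rw [hℓ'coc γ μ]; group
          _ = (φ γ (ℓ μ) * (φ γ (ℓ' μ))⁻¹) * (ℓ (γ * μ) * (ℓ' (γ * μ))⁻¹)⁻¹ *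
              (ℓ γ * (ℓ' γ)⁻¹) := by
              refine helper1 _ _ _ _ _ ?_ ?_
              · have h := hker _ (hkerφ γ _ (hbker μ))
                intro g
                have := h g
                rwa [map_mul, map_inv] at this
              · exact hker _ (hbker (γ * μ))
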